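/- Let ρ > 0, let Σ ∈ ℝ^{d×d} be symmetric positive definite, and let D ∈ ℝ^{d×d} be symmetric positive semidefinite with D ≠ 0. Then there exists a unique γ⋆ ∈ ℝ such that γ⋆ I_d − D is positive definite and Tr(Σ (I_d − γ⋆ (γ⋆ I_d − D)^{-1})²) = ρ²; moreover, the matrix S⋆ = (γ⋆)² (γ⋆ I_d − D)^{-1} Σ (γ⋆ I_d − D)^{-1} maximizes ⟨S, D⟩ over all symmetric positive semidefinite S ∈ ℝ^{d×d} with B(S) ≤ ρ², and S⋆ ⪰ λ_min(Σ)·I_d. -/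

import Mathlib

open Matrix

-- `msqrt M` is the unique symmetric PSD square root of a symmetric PSD matrix `M` (else `0`).
open Classical in
noncomputable def msqrt {ι : Type*} [Fintype ι] [DecidableEq ι] (M : Matrix ι ι ℝ) : Matrix ι ι ℝ :=
  if h : M.PosSemidef then
    (h.1.eigenvectorUnitary : Matrix ι ι ℝ) * diagonal (Real.sqrt ∘ h.1.eigenvalues) *
      (star h.1.eigenvectorUnitary : Matrix ι ι ℝ) else 0

/-- `Bdist Sg S = Tr(S + Σ − 2(Σ^{1/2} S Σ^{1/2})^{1/2})`. -/
noncomputable def Bdist {ι : Type*} [Fintype ι] [DecidableEq ι] (Sg S : Matrix ι ι ℝ) : ℝ :=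
  (S + Sg - (2:ℝ) • msqrt (msqrt Sg * S * msqrt Sg)).trace

/-!
Diagonalise `D = U diag(μ) Uᵀ` and put `c i = (Uᵀ Σ U) i i > 0`. For `γ > λ_max(D)` the constraint
reads `φ(γ) = ∑ i, c i (μ i / (γ - μ i))² = ρ²`, and `φ` decreases strictly and continuously from
`+∞` to `0` on `(λ_max(D), ∞)`; this gives `γ⋆` and its uniqueness.

With `A = γ⋆ (γ⋆ I - D)⁻¹` we have `S⋆ = A Σ A`, `B(S⋆) = Tr(Σ (I - A)²) = ρ²` and
`D = γ⋆ (I - A⁻¹)`. Optimality is weak duality: for `R = Σ^{1/2}`, `Y = (R S R)^{1/2}` and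
`C = R A R`, expanding `0 ≤ Tr((Y - C) C⁻¹ (Y - C))` gives
`Tr(S (I - A⁻¹)) ≤ B(S) - Tr Σ + Tr(Σ A)`, with equality at `S = S⋆`.
Finally `A² ⪰ I`, so `S⋆ - λ I = A (Σ - λ I) A + λ (A² - I) ⪰ 0` for `λ = λ_min(Σ) ≥ 0`.
-/

open scoped MatrixOrder

variable {n : Type*} [Fintype n]

lemma Matrix.PosSemidef.mul_mul_of_isHermitian {M B : Matrix n n ℝ} (hM : M.PosSemidef)
    (hB : B.IsHermitian) : (B * M * B).PosSemidef := by
  simpa only [hB.eq] using hM.mul_mul_conjTranspose_same B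

variable [DecidableEq n]

section Sqrt

variable {M : Matrix n n ℝ}

lemma msqrt_eq_sqrt (hM : M.PosSemidef) : msqrt M = CFC.sqrt M := by
  rw [msqrt, dif_pos hM, CFC.sqrt_eq_cfc, cfc_nnreal_eq_real _ M, hM.1.cfc_eq]
  simp only [IsHermitian.cfc, Unitary.conjStarAlgAut_apply]
  congr 3
  funext i
  simp [Real.coe_sqrt, Real.coe_toNNReal', hM.eigenvalues_nonneg i]

lemma posSemidef_msqrt (hM : M.PosSemidef) : (msqrt M).PosSemidef := by
  rw [msqrt_eq_sqrt hM, ← nonneg_iff_posSemidef]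
  exact CFC.sqrt_nonneg M

lemma msqrt_mul_self (hM : M.PosSemidef) : msqrt M * msqrt M = M := by
  rw [msqrt_eq_sqrt hM]
  exact CFC.sqrt_mul_sqrt_self M (nonneg_iff_posSemidef.mpr hM)

lemma msqrt_sq (hM : M.PosSemidef) : msqrt (M ^ 2) = M := by
  rw [msqrt_eq_sqrt (hM.pow 2)]
  exact CFC.sqrt_sq M (nonneg_iff_posSemidef.mpr hM)

end Sqrt

lemma two_mul_trace_le {Y C : Matrix n n ℝ} (hY : Y.IsHermitian) (hC : C.PosDef) :
    2 * Y.trace ≤ (Y * C⁻¹ * Y).trace + C.trace := by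
  have hCinv : C * C⁻¹ = 1 := C.mul_nonsing_inv hC.det_pos.ne'.isUnit
  have hinvC : C⁻¹ * C = 1 := C.nonsing_inv_mul hC.det_pos.ne'.isUnit
  have h0 : 0 ≤ ((Y - C) * C⁻¹ * (Y - C)).trace := by
    have := hC.inv.posSemidef.mul_mul_conjTranspose_same (Y - C)
    rw [conjTranspose_sub, hY.eq, hC.1.eq] at this
    exact this.trace_nonneg
  have hexp : ((Y - C) * C⁻¹ * (Y - C)).trace = (Y * C⁻¹ * Y).trace - 2 * Y.trace + C.trace := by
    simp only [sub_mul, mul_sub, Matrix.mul_assoc, hCinv, hinvC, mul_one, one_mul, trace_sub]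
    ring
  linarith

section Bures

variable {Sg A S : Matrix n n ℝ}

lemma Bdist_eq (Sg S : Matrix n n ℝ) :
    Bdist Sg S = S.trace + Sg.trace - 2 * (msqrt (msqrt Sg * S * msqrt Sg)).trace := by
  rw [Bdist, trace_sub, trace_add, trace_smul, smul_eq_mul]

lemma Bdist_mul_mul_self (hSg : Sg.PosSemidef) (hA : A.PosSemidef) :
    Bdist Sg (A * Sg * A) = (Sg * (1 - A) ^ 2).trace := by
  set R := msqrt Sg
  have hRR : R * R = Sg := msqrt_mul_self hSg
  have hRAR : (R * A * R).PosSemidef := hA.mul_mul_of_isHermitian (posSemidef_msqrt hSg).1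
  have hsq : R * (A * Sg * A) * R = (R * A * R) ^ 2 := by
    rw [← hRR, sq]; noncomm_ring
  have hquad : (A * Sg * A).trace = (Sg * (A * A)).trace := by
    rw [trace_mul_comm, ← Matrix.mul_assoc, trace_mul_comm]
  have hlin : (R * A * R).trace = (Sg * A).trace := by
    rw [trace_mul_cycle, hRR]
  rw [Bdist_eq, hsq, msqrt_sq hRAR, hquad, hlin]
  simp only [sq, sub_mul, mul_sub, mul_one, one_mul, trace_sub]
  ring

lemma trace_sub_trace_inv_mul_le (hSg : Sg.PosDef) (hA : A.PosDef) (hS : S.PosSemidef) :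
    S.trace - (A⁻¹ * S).trace ≤ Bdist Sg S - Sg.trace + (Sg * A).trace := by
  set R := msqrt Sg
  have hR : R.PosSemidef := posSemidef_msqrt hSg.posSemidef
  have hRR : R * R = Sg := msqrt_mul_self hSg.posSemidef
  have hRdet : IsUnit R.det := by
    refine isUnit_iff_ne_zero.2 fun h => hSg.det_pos.ne' ?_
    rw [← hRR, det_mul, h, zero_mul]
  have hRSR : (R * S * R).PosSemidef := hS.mul_mul_of_isHermitian hR.1
  have hC : (R * A * R).PosDef := by
    have := (IsUnit.posDef_star_right_conjugate_iff ((R.isUnit_iff_isUnit_det).2 hRdet)).2 hA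
    rwa [star_eq_conjTranspose, hR.1.eq] at this
  set Y := msqrt (R * S * R)
  have hYY : Y * Y = R * S * R := msqrt_mul_self hRSR
  have hRinv : R⁻¹ * R = 1 := R.nonsing_inv_mul hRdet
  have hRinv' : R * R⁻¹ = 1 := R.mul_nonsing_inv hRdet
  have hquad : (Y * (R * A * R)⁻¹ * Y).trace = (A⁻¹ * S).trace := calc
    _ = (R⁻¹ * (A⁻¹ * (R⁻¹ * R) * S) * R).trace := by
        rw [trace_mul_cycle, hYY, Matrix.mul_inv_rev, Matrix.mul_inv_rev, trace_mul_comm]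
        noncomm_ring
    _ = (A⁻¹ * S).trace := by rw [hRinv, mul_one, trace_mul_cycle, hRinv', one_mul]
  have hlin : (R * A * R).trace = (Sg * A).trace := by
    rw [trace_mul_cycle, hRR]
  have := two_mul_trace_le (posSemidef_msqrt hRSR).1 hC
  rw [hquad, hlin] at this
  rw [Bdist_eq]
  linarith

end Bures

lemma trace_mul_one_sub_inv_le_of_Bdist_le {Sg A S : Matrix n n ℝ} (hSg : Sg.PosDef)
    (hA : A.PosDef) (hS : S.PosSemidef) (hB : Bdist Sg S ≤ Bdist Sg (A * Sg * A)) :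
    (S * (1 - A⁻¹)).trace ≤ (A * Sg * A * (1 - A⁻¹)).trace := by
  have hAinv : A * A⁻¹ = 1 := A.mul_nonsing_inv hA.det_pos.ne'.isUnit
  have hopt : Bdist Sg (A * Sg * A) - Sg.trace + (Sg * A).trace
      = (A * Sg * A * (1 - A⁻¹)).trace := by
    rw [Bdist_mul_mul_self hSg.posSemidef hA.posSemidef, mul_sub, mul_one, Matrix.mul_assoc _ A,
      hAinv, mul_one]
    simp only [sq, sub_mul, mul_sub, mul_one, one_mul, trace_sub]
    rw [trace_mul_comm A Sg, ← Matrix.mul_assoc, trace_mul_cycle Sg A A]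
    ring
  calc (S * (1 - A⁻¹)).trace = S.trace - (A⁻¹ * S).trace := by
        rw [mul_sub, mul_one, trace_sub, trace_mul_comm]
    _ ≤ Bdist Sg S - Sg.trace + (Sg * A).trace := trace_sub_trace_inv_mul_le hSg hA hS
    _ ≤ (A * Sg * A * (1 - A⁻¹)).trace := by linarith

section FunctionalCalculus

variable {D : Matrix n n ℝ}

lemma trace_mul_cfc (hD : D.IsHermitian) (M : Matrix n n ℝ) (f : ℝ → ℝ) :
    (M * cfc f D).trace = ∑ i, (star (hD.eigenvectorUnitary : Matrix n n ℝ) * M *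
      (hD.eigenvectorUnitary : Matrix n n ℝ)) i i * f (hD.eigenvalues i) := by
  rw [hD.cfc_eq, IsHermitian.cfc, Unitary.conjStarAlgAut_apply, ← Matrix.mul_assoc,
    ← Matrix.mul_assoc, trace_mul_cycle, ← Matrix.mul_assoc]
  simp [Matrix.trace, Matrix.mul_diagonal]

lemma smul_one_sub_eq_cfc (hD : D.IsHermitian) (γ : ℝ) :
    γ • (1 : Matrix n n ℝ) - D = cfc (fun x => γ - x) D := by
  have : IsSelfAdjoint D := hD
  rw [cfc_sub .., cfc_const γ D, cfc_id' ℝ D, Algebra.algebraMap_eq_smul_one]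

lemma posDef_smul_one_sub_iff (hD : D.IsHermitian) {γ : ℝ} :
    (γ • (1 : Matrix n n ℝ) - D).PosDef ↔ ∀ x ∈ spectrum ℝ D, x < γ := by
  have : IsSelfAdjoint D := hD
  rw [← isStrictlyPositive_iff_posDef, smul_one_sub_eq_cfc hD, cfc_isStrictlyPositive_iff ..]
  simp only [sub_pos]

lemma smul_inv_smul_one_sub_eq_cfc (hD : D.IsHermitian) {γ : ℝ}
    (hγ : ∀ x ∈ spectrum ℝ D, x < γ) :
    γ • (γ • (1 : Matrix n n ℝ) - D)⁻¹ = cfc (fun x => γ / (γ - x)) D := by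
  have : IsSelfAdjoint D := hD
  have hne : ∀ x ∈ spectrum ℝ D, γ - x ≠ 0 := fun x hx => (sub_pos.2 (hγ x hx)).ne'
  simp only [div_eq_mul_inv]
  rw [cfc_const_mul γ (fun x => (γ - x)⁻¹) D ((continuousOn_const.sub continuousOn_id).inv₀ hne),
    cfc_inv (fun x => γ - x) D hne,
    ← smul_one_sub_eq_cfc hD, nonsing_inv_eq_ringInverse]

end FunctionalCalculus

section Secular

variable {ι : Type*} [Fintype ι]

noncomputable def secular (c μ : ι → ℝ) (γ : ℝ) : ℝ := ∑ i, c i * (μ i / (γ - μ i)) ^ 2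

variable {c μ : ι → ℝ} {j : ι}

lemma div_sub_self_le_div_sub_self {x m γ : ℝ} (hx : 0 ≤ x) (hxm : x ≤ m) (hm : m < γ) :
    x / (γ - x) ≤ m / (γ - m) :=
  div_le_div₀ (hx.trans hxm) hxm (sub_pos.2 hm) (by linarith)

lemma mul_sq_le_secular (hc : ∀ i, 0 ≤ c i) (γ : ℝ) :
    c j * (μ j / (γ - μ j)) ^ 2 ≤ secular c μ γ :=
  Finset.single_le_sum (f := fun i => c i * (μ i / (γ - μ i)) ^ 2)
    (fun i _ => mul_nonneg (hc i) (sq_nonneg _)) (Finset.mem_univ j)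

lemma secular_le_sum_mul_sq (hc : ∀ i, 0 ≤ c i) (hμ : ∀ i, 0 ≤ μ i) (hj : ∀ i, μ i ≤ μ j)
    {γ : ℝ} (hγ : μ j < γ) : secular c μ γ ≤ (∑ i, c i) * (μ j / (γ - μ j)) ^ 2 := by
  rw [secular, Finset.sum_mul]
  refine Finset.sum_le_sum fun i _ => mul_le_mul_of_nonneg_left ?_ (hc i)
  exact pow_le_pow_left₀ (div_nonneg (hμ i) (sub_pos.2 ((hj i).trans_lt hγ)).le)
    (div_sub_self_le_div_sub_self (hμ i) (hj i) hγ) 2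

lemma continuousOn_secular (hj : ∀ i, μ i ≤ μ j) : ContinuousOn (secular c μ) (Set.Ioi (μ j)) := by
  refine continuousOn_finsetSum _ fun i _ => ((continuousOn_const.div
    (continuousOn_id.sub continuousOn_const) fun γ hγ => ?_).pow 2).const_smul (c i)
  exact (sub_pos.2 ((hj i).trans_lt hγ)).ne'

lemma secular_strictAntiOn (hc : ∀ i, 0 ≤ c i) (hμ : ∀ i, 0 ≤ μ i) (hj : ∀ i, μ i ≤ μ j)
    (hcj : 0 < c j) (hμj : 0 < μ j) : StrictAntiOn (secular c μ) (Set.Ioi (μ j)) := by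
  intro x hx y hy hxy
  have hx' : ∀ i, 0 < x - μ i := fun i => sub_pos.2 ((hj i).trans_lt hx)
  have hy' : ∀ i, 0 < y - μ i := fun i => sub_pos.2 ((hj i).trans_lt hy)
  refine Finset.sum_lt_sum (fun i _ => ?_) ⟨j, Finset.mem_univ j, ?_⟩
  · refine mul_le_mul_of_nonneg_left (pow_le_pow_left₀ (div_nonneg (hμ i) (hy' i).le) ?_ 2) (hc i)
    exact div_le_div_of_nonneg_left (hμ i) (hx' i) (by linarith)
  · refine mul_lt_mul_of_pos_left
      (pow_lt_pow_left₀ ?_ (div_nonneg (hμ j) (hy' j).le) two_ne_zero) hcj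
    exact div_lt_div_of_pos_left hμj (hx' j) (by linarith)

lemma exists_secular_eq (hc : ∀ i, 0 ≤ c i) (hμ : ∀ i, 0 ≤ μ i) (hj : ∀ i, μ i ≤ μ j)
    (hcj : 0 < c j) (hμj : 0 < μ j) {r : ℝ} (hr : 0 < r) : ∃ γ, μ j < γ ∧ secular c μ γ = r := by
  set m := μ j
  set C := ∑ i, c i
  have hjC : c j ≤ C := Finset.single_le_sum (fun i _ => hc i) (Finset.mem_univ j)
  have hinv : ∀ t, 0 < t → m / (m + m / t - m) = t := fun t ht => by
    rw [add_sub_cancel_left, div_div_cancel₀ hμj.ne']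
  -- with `t = m / (γ - m)`, `secular` lies between `c j * t ^ 2` and `C * t ^ 2`
  set ta := √(r / c j)
  set tb := √(r / C)
  have hta : 0 < ta := Real.sqrt_pos.2 (div_pos hr hcj)
  have htb : 0 < tb := Real.sqrt_pos.2 (div_pos hr (hcj.trans_le hjC))
  have hab : m + m / ta ≤ m + m / tb := by
    gcongr
    exact Real.sqrt_le_sqrt (div_le_div_of_nonneg_left hr.le hcj hjC)
  have hGa : r ≤ secular c μ (m + m / ta) := calc
    r = c j * ta ^ 2 := by rw [Real.sq_sqrt (div_pos hr hcj).le, mul_div_cancel₀ r hcj.ne']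
    _ = c j * (m / (m + m / ta - m)) ^ 2 := by rw [hinv ta hta]
    _ ≤ _ := mul_sq_le_secular hc _
  have hGb : secular c μ (m + m / tb) ≤ r := calc
    _ ≤ C * (m / (m + m / tb - m)) ^ 2 := secular_le_sum_mul_sq hc hμ hj
      (lt_add_of_pos_right _ (div_pos hμj htb))
    _ = C * tb ^ 2 := by rw [hinv tb htb]
    _ = r := by
      rw [Real.sq_sqrt (div_pos hr (hcj.trans_le hjC)).le, mul_div_cancel₀ r (hcj.trans_le hjC).ne']
  have hIcc : Set.Icc (m + m / ta) (m + m / tb) ⊆ Set.Ioi m := fun γ hγ =>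
    (lt_add_of_pos_right _ (div_pos hμj hta)).trans_le hγ.1
  obtain ⟨γ, hγ, hγr⟩ :=
    intermediate_value_Icc' hab ((continuousOn_secular hj).mono hIcc) ⟨hGb, hGa⟩
  exact ⟨γ, hIcc hγ, hγr⟩

end Secular

section Resolvent

variable {D : Matrix n n ℝ} {γ : ℝ}

lemma Matrix.PosSemidef.exists_max_eigenvalue_pos (hD : D.PosSemidef) (hD0 : D ≠ 0) :
    ∃ j, 0 < hD.1.eigenvalues j ∧ ∀ i, hD.1.eigenvalues i ≤ hD.1.eigenvalues j := by
  cases isEmpty_or_nonempty n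
  · exact absurd (Subsingleton.elim D 0) hD0
  obtain ⟨j, hj⟩ := Finite.exists_max hD.1.eigenvalues
  refine ⟨j, lt_of_le_of_ne (hD.eigenvalues_nonneg j) fun h => hD0 ?_, hj⟩
  exact hD.1.eigenvalues_eq_zero_iff.1 <| funext fun i =>
    le_antisymm ((hj i).trans h.ge) (hD.eigenvalues_nonneg i)

lemma trace_mul_one_sub_sq_eq_secular (hD : D.IsHermitian) (hγ : ∀ i, hD.eigenvalues i < γ)
    (M : Matrix n n ℝ) :
    (M * (1 - γ • (γ • (1 : Matrix n n ℝ) - D)⁻¹) ^ 2).trace =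
      secular (fun i => (star (hD.eigenvectorUnitary : Matrix n n ℝ) * M *
        (hD.eigenvectorUnitary : Matrix n n ℝ)) i i) hD.eigenvalues γ := by
  have : IsSelfAdjoint D := hD
  have hspec : ∀ x ∈ spectrum ℝ D, x < γ := by
    rw [hD.spectrum_real_eq_range_eigenvalues]
    rintro - ⟨i, rfl⟩
    exact hγ i
  have hne : ∀ x ∈ spectrum ℝ D, γ - x ≠ 0 := fun x hx => (sub_pos.2 (hspec x hx)).ne'
  have hcont : ContinuousOn (fun x => γ / (γ - x)) (spectrum ℝ D) :=
    continuousOn_const.div (continuousOn_const.sub continuousOn_id) hne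
  rw [smul_inv_smul_one_sub_eq_cfc hD hspec, ← cfc_const_one ℝ D, ← cfc_sub .., ← cfc_pow ..,
    trace_mul_cfc hD]
  refine Finset.sum_congr rfl fun i _ => ?_
  have : γ - hD.eigenvalues i ≠ 0 := (sub_pos.2 (hγ i)).ne'
  congr 1
  field_simp
  ring

lemma existsUnique_posDef_trace_mul_one_sub_sq_eq {Sg : Matrix n n ℝ} (hSg : Sg.PosDef)
    (hD : D.PosSemidef) (hD0 : D ≠ 0) {r : ℝ} (hr : 0 < r) :
    ∃! γ : ℝ, (γ • (1 : Matrix n n ℝ) - D).PosDef ∧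
      (Sg * (1 - γ • (γ • (1 : Matrix n n ℝ) - D)⁻¹) ^ 2).trace = r := by
  set μ := hD.1.eigenvalues
  set U := (hD.1.eigenvectorUnitary : Matrix n n ℝ)
  obtain ⟨j, hμj, hj⟩ := hD.exists_max_eigenvalue_pos hD0
  have hE : ∀ γ, (γ • (1 : Matrix n n ℝ) - D).PosDef ↔ μ j < γ := fun γ => by
    rw [posDef_smul_one_sub_iff hD.1, hD.1.spectrum_real_eq_range_eigenvalues,
      Set.forall_mem_range]
    exact ⟨fun h => h j, fun h i => (hj i).trans_lt h⟩
  have hc : ∀ i, 0 < (star U * Sg * U) i i := fun i => by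
    have := (Matrix.IsUnit.posDef_star_right_conjugate_iff
      (Unitary.isUnit_coe (U := star hD.1.eigenvectorUnitary))).2 hSg
    simpa [U] using this.diag_pos (i := i)
  have htr : ∀ γ, μ j < γ → (Sg * (1 - γ • (γ • (1 : Matrix n n ℝ) - D)⁻¹) ^ 2).trace =
      secular (fun i => (star U * Sg * U) i i) μ γ := fun γ hγ =>
    trace_mul_one_sub_sq_eq_secular hD.1 (fun i => (hj i).trans_lt hγ) Sg
  obtain ⟨γ, hγ, hroot⟩ :=
    exists_secular_eq (fun i => (hc i).le) hD.eigenvalues_nonneg hj (hc j) hμj hr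
  refine ⟨γ, ⟨(hE γ).2 hγ, (htr γ hγ).trans hroot⟩, fun γ' ⟨hE', hroot'⟩ => ?_⟩
  have hγ' := (hE γ').1 hE'
  exact (secular_strictAntiOn (fun i => (hc i).le) hD.eigenvalues_nonneg hj (hc j) hμj).injOn
    hγ' hγ (((htr γ' hγ').symm.trans hroot').trans hroot.symm)

lemma Matrix.PosSemidef.pos_of_posDef_smul_one_sub (hD : D.PosSemidef) (hD0 : D ≠ 0)
    (hE : (γ • (1 : Matrix n n ℝ) - D).PosDef) : 0 < γ := by
  by_contra hγ
  have hle : D ≤ γ • (1 : Matrix n n ℝ) := hE.posSemidef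
  have hγ0 : γ • (1 : Matrix n n ℝ) ≤ 0 :=
    smul_nonpos_of_nonpos_of_nonneg (not_lt.1 hγ) (nonneg_iff_posSemidef.2 PosSemidef.one)
  exact hD0 (le_antisymm (hle.trans hγ0) (nonneg_iff_posSemidef.2 hD))

lemma one_le_smul_inv_smul_one_sub_mul_self (hD : D.PosSemidef)
    (hE : (γ • (1 : Matrix n n ℝ) - D).PosDef) :
    1 ≤ γ • (γ • (1 : Matrix n n ℝ) - D)⁻¹ * (γ • (γ • (1 : Matrix n n ℝ) - D)⁻¹) := by
  have : IsSelfAdjoint D := hD.1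
  have hspec := (posDef_smul_one_sub_iff hD.1).1 hE
  have hcont : ContinuousOn (fun x => γ / (γ - x)) (spectrum ℝ D) :=
    continuousOn_const.div (continuousOn_const.sub continuousOn_id)
      fun x hx => (sub_pos.2 (hspec x hx)).ne'
  rw [smul_inv_smul_one_sub_eq_cfc hD.1 hspec, ← cfc_mul .., ← cfc_const_one ℝ D]
  refine cfc_mono fun x hx => ?_
  have hx0 : 0 ≤ x := spectrum_nonneg_of_nonneg (nonneg_iff_posSemidef.2 hD) hx
  have hx1 : 1 ≤ γ / (γ - x) := by
    rw [one_le_div (sub_pos.2 (hspec x hx))]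
    linarith
  exact one_le_mul_of_one_le_of_one_le hx1 hx1

lemma eq_smul_one_sub_inv_smul_inv_smul_one_sub (hE : (γ • (1 : Matrix n n ℝ) - D).PosDef)
    (hγ : γ ≠ 0) : D = γ • (1 - (γ • (γ • (1 : Matrix n n ℝ) - D)⁻¹)⁻¹) := by
  set E := γ • (1 : Matrix n n ℝ) - D
  have hinv : (γ • E⁻¹)⁻¹ = γ⁻¹ • E := by
    refine Matrix.inv_eq_left_inv ?_
    rw [smul_mul_smul_comm, inv_mul_cancel₀ hγ, one_smul,
      E.mul_nonsing_inv hE.det_pos.ne'.isUnit]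
  rw [hinv, smul_sub, smul_smul, mul_inv_cancel₀ hγ, one_smul, sub_sub_cancel]

end Resolvent

lemma Matrix.IsHermitian.iInf_eigenvalues_smul_one_le {M : Matrix n n ℝ} (hM : M.IsHermitian) :
    (⨅ i, hM.eigenvalues i) • (1 : Matrix n n ℝ) ≤ M := by
  have : IsSelfAdjoint M := hM
  rw [← Algebra.algebraMap_eq_smul_one, algebraMap_le_iff_le_spectrum,
    hM.spectrum_real_eq_range_eigenvalues]
  rintro - ⟨i, rfl⟩
  exact ciInf_le (Finite.bddBelow_range _) i

lemma smul_one_le_mul_mul_of_le {Sg A : Matrix n n ℝ} {l : ℝ} (hl : 0 ≤ l)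
    (hSg : l • (1 : Matrix n n ℝ) ≤ Sg) (hA : A.IsHermitian) (hAA : 1 ≤ A * A) :
    l • (1 : Matrix n n ℝ) ≤ A * Sg * A := by
  have hdecomp : A * Sg * A - l • 1 = A * (Sg - l • 1) * A + l • (A * A - 1) := by
    simp only [Matrix.mul_sub, Matrix.sub_mul, Matrix.mul_smul, Matrix.smul_mul, mul_one, smul_sub]
    abel
  have hconj : 0 ≤ A * (Sg - l • 1) * A :=
    nonneg_iff_posSemidef.2 ((nonneg_iff_posSemidef.1 (sub_nonneg.2 hSg)).mul_mul_of_isHermitian hA)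
  rw [← sub_nonneg, hdecomp]
  exact add_nonneg hconj (smul_nonneg hl (sub_nonneg.2 hAA))

theorem stmt6_general {d : ℕ} (ρ : ℝ) (hρ : 0 < ρ) (Sg D : Matrix (Fin d) (Fin d) ℝ)
    (hSg : Sg.PosDef) (hD : D.PosSemidef) (hD0 : D ≠ 0) :
    ∃ γs : ℝ,
      ((γs • (1 : Matrix (Fin d) (Fin d) ℝ) - D).PosDef ∧
        (Sg * (1 - γs • (γs • (1 : Matrix (Fin d) (Fin d) ℝ) - D)⁻¹) ^ 2).trace = ρ ^ 2) ∧
      (∀ γ' : ℝ, (γ' • (1 : Matrix (Fin d) (Fin d) ℝ) - D).PosDef →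
        (Sg * (1 - γ' • (γ' • (1 : Matrix (Fin d) (Fin d) ℝ) - D)⁻¹) ^ 2).trace = ρ ^ 2 →
        γ' = γs) ∧
      (γs ^ 2 • ((γs • (1 : Matrix (Fin d) (Fin d) ℝ) - D)⁻¹ * Sg *
          (γs • (1 : Matrix (Fin d) (Fin d) ℝ) - D)⁻¹)).PosSemidef ∧
      Bdist Sg (γs ^ 2 • ((γs • (1 : Matrix (Fin d) (Fin d) ℝ) - D)⁻¹ * Sg *
          (γs • (1 : Matrix (Fin d) (Fin d) ℝ) - D)⁻¹)) ≤ ρ ^ 2 ∧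
      (∀ S : Matrix (Fin d) (Fin d) ℝ, S.PosSemidef → Bdist Sg S ≤ ρ ^ 2 →
        (Sᵀ * D).trace ≤
          ((γs ^ 2 • ((γs • (1 : Matrix (Fin d) (Fin d) ℝ) - D)⁻¹ * Sg *
            (γs • (1 : Matrix (Fin d) (Fin d) ℝ) - D)⁻¹))ᵀ * D).trace) ∧
      ((γs ^ 2 • ((γs • (1 : Matrix (Fin d) (Fin d) ℝ) - D)⁻¹ * Sg *
          (γs • (1 : Matrix (Fin d) (Fin d) ℝ) - D)⁻¹)) -
        (⨅ i, hSg.1.eigenvalues i) • (1 : Matrix (Fin d) (Fin d) ℝ)).PosSemidef := by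
  obtain ⟨γs, ⟨hE, hroot⟩, huniq⟩ :=
    existsUnique_posDef_trace_mul_one_sub_sq_eq hSg hD hD0 (pow_pos hρ 2)
  have hγs : 0 < γs := hD.pos_of_posDef_smul_one_sub hD0 hE
  have hDA := eq_smul_one_sub_inv_smul_inv_smul_one_sub hE hγs.ne'
  have hAA := one_le_smul_inv_smul_one_sub_mul_self hD hE
  set A := γs • (γs • (1 : Matrix (Fin d) (Fin d) ℝ) - D)⁻¹
  have hA : A.PosDef := hE.inv.smul hγs
  have hSstar_eq : γs ^ 2 • ((γs • (1 : Matrix (Fin d) (Fin d) ℝ) - D)⁻¹ * Sg *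
      (γs • (1 : Matrix (Fin d) (Fin d) ℝ) - D)⁻¹) = A * Sg * A := by
    rw [Matrix.smul_mul, Matrix.mul_smul, Matrix.smul_mul, smul_smul, sq]
  have hBstar : Bdist Sg (A * Sg * A) = ρ ^ 2 :=
    (Bdist_mul_mul_self hSg.posSemidef hA.posSemidef).trans hroot
  have hSstar : (A * Sg * A).PosSemidef := hSg.posSemidef.mul_mul_of_isHermitian hA.1
  refine ⟨γs, ⟨hE, hroot⟩, fun γ' h₁ h₂ => huniq γ' ⟨h₁, h₂⟩, ?_⟩
  rw [hSstar_eq]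
  refine ⟨hSstar, hBstar.le, fun S hS hBS => ?_, ?_⟩
  · rw [(isHermitian_iff_isSymm.1 hS.1).eq, (isHermitian_iff_isSymm.1 hSstar.1).eq, hDA]
    simp only [Matrix.mul_smul, trace_smul, smul_eq_mul]
    exact mul_le_mul_of_nonneg_left
      (trace_mul_one_sub_inv_le_of_Bdist_le hSg hA hS (hBstar ▸ hBS)) hγs.le
  · exact smul_one_le_mul_mul_of_le (Real.iInf_nonneg fun i => (hSg.eigenvalues_pos i).le)
      hSg.1.iInf_eigenvalues_smul_one_le hA.1 hAA

/-- There is a unique `γ⋆` with `γ⋆ I − D ≻ 0` solving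
`Tr(Σ (I − γ⋆(γ⋆ I − D)⁻¹)²) = ρ²`; moreover `S⋆ = (γ⋆)² (γ⋆I − D)⁻¹ Σ (γ⋆I − D)⁻¹`
maximizes `⟨S, D⟩` over the feasible set `{S ⪰ 0 : B(S) ≤ ρ²}`, and `S⋆ ⪰ λ_min(Σ) I`. -/
theorem stmt6 {d : ℕ} [NeZero d] (ρ : ℝ) (hρ : 0 < ρ) (Sg D : Matrix (Fin d) (Fin d) ℝ)
    (hSg : Sg.PosDef) (hD : D.PosSemidef) (hD0 : D ≠ 0) :
    ∃ γs : ℝ,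
      ((γs • (1 : Matrix (Fin d) (Fin d) ℝ) - D).PosDef ∧
        (Sg * (1 - γs • (γs • (1 : Matrix (Fin d) (Fin d) ℝ) - D)⁻¹) ^ 2).trace = ρ ^ 2) ∧
      (∀ γ' : ℝ, (γ' • (1 : Matrix (Fin d) (Fin d) ℝ) - D).PosDef →
        (Sg * (1 - γ' • (γ' • (1 : Matrix (Fin d) (Fin d) ℝ) - D)⁻¹) ^ 2).trace = ρ ^ 2 →
        γ' = γs) ∧
      (γs ^ 2 • ((γs • (1 : Matrix (Fin d) (Fin d) ℝ) - D)⁻¹ * Sg *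
          (γs • (1 : Matrix (Fin d) (Fin d) ℝ) - D)⁻¹)).PosSemidef ∧
      Bdist Sg (γs ^ 2 • ((γs • (1 : Matrix (Fin d) (Fin d) ℝ) - D)⁻¹ * Sg *
          (γs • (1 : Matrix (Fin d) (Fin d) ℝ) - D)⁻¹)) ≤ ρ ^ 2 ∧
      (∀ S : Matrix (Fin d) (Fin d) ℝ, S.PosSemidef → Bdist Sg S ≤ ρ ^ 2 →
        (Sᵀ * D).trace ≤
          ((γs ^ 2 • ((γs • (1 : Matrix (Fin d) (Fin d) ℝ) - D)⁻¹ * Sg *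
            (γs • (1 : Matrix (Fin d) (Fin d) ℝ) - D)⁻¹))ᵀ * D).trace) ∧
      ((γs ^ 2 • ((γs • (1 : Matrix (Fin d) (Fin d) ℝ) - D)⁻¹ * Sg *
          (γs • (1 : Matrix (Fin d) (Fin d) ℝ) - D)⁻¹)) -
        (⨅ i, hSg.1.eigenvalues i) • (1 : Matrix (Fin d) (Fin d) ℝ)).PosSemidef :=
  stmt6_general ρ hρ Sg D hSg hD hD0
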